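/- arXiv:2302.00737 — 2 statements merged into one kernel-verified Lean document; each statement's English description precedes it below -/
import Mathlib

section
/- Full tracker correctness (Lemma 'mainlemma', abstract form): for every finite trace t : List Label, the tracker meta-configuration equals the set of endpoints of atomic paths exhibiting that trace, i.e. Track t = Endpoints t. -/
universe u v

/-- Atomic paths: `HasTrace step s t s'` means there is a path from `s` to `s'`
whose observable events (labels of non-silent steps) spell out `t`. -/
inductive HasTrace {State : Type u} {Label : Type v}
    (step : State → Option Label → State → Prop) : State → List Label → State → Prop
  | refl (s : State) : HasTrace step s [] s
  | silent {s s₁ s' : State} {t : List Label} :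
      step s none s₁ → HasTrace step s₁ t s' → HasTrace step s t s'
  | event {s s₁ s' : State} {l : Label} {t : List Label} :
      step s (some l) s₁ → HasTrace step s₁ t s' → HasTrace step s (l :: t) s'

/-- Endpoints of atomic paths from `s0` exhibiting trace `t`. -/
def Endpoints {State : Type u} {Label : Type v}
    (step : State → Option Label → State → Prop) (s0 : State) (t : List Label) :
    Set State :=
  { s' | HasTrace step s0 t s' }

/-- Closure of a set of states under silent (linearization) steps. -/
def silentClosure {State : Type u} {Label : Type v}
    (step : State → Option Label → State → Prop) (M : Set State) : Set State :=
  { s' | ∃ s ∈ M, Relation.ReflTransGen (fun a b => step a none b) s s' }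

/-- Successors of a set of states under the observable event `l`. -/
def eventImage {State : Type u} {Label : Type v}
    (step : State → Option Label → State → Prop) (l : Label) (M : Set State) : Set State :=
  { s' | ∃ s ∈ M, step s (some l) s' }

/-- Auxiliary: the full tracker, recursing on the reversed trace. -/
def TrackRev {State : Type u} {Label : Type v}
    (step : State → Option Label → State → Prop) (s0 : State) :
    List Label → Set State
  | [] => silentClosure step {s0}
  | l :: t => silentClosure step (eventImage step l (TrackRev step s0 t))

/-- The full tracker meta-configuration: `Track [] = silentClosure {s0}` and
`Track (t ++ [l]) = silentClosure (eventImage l (Track t))`. -/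
def Track {State : Type u} {Label : Type v}
    (step : State → Option Label → State → Prop) (s0 : State) (t : List Label) :
    Set State :=
  TrackRev step s0 t.reverse

/-! Silent steps can be absorbed on either side of an atomic path, and a path splits at any
point of its trace; hence the endpoints for `t ++ [l]` are obtained from those for `t` by one
`l`-step followed by silent steps, which is exactly the tracker's recursion. -/

namespace HasTrace

variable {State : Type u} {Label : Type v} {step : State → Option Label → State → Prop}
  {s s' m : State} {t t₁ t₂ : List Label}

theorem append (h₁ : HasTrace step s t₁ m) (h₂ : HasTrace step m t₂ s') :
    HasTrace step s (t₁ ++ t₂) s' := by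
  induction h₁ with
  | refl => exact h₂
  | silent hs _ ih => exact .silent hs (ih h₂)
  | event hs _ ih => exact .event hs (ih h₂)

theorem of_reflTransGen (h : Relation.ReflTransGen (fun a b => step a none b) s s') :
    HasTrace step s [] s' := by
  induction h using Relation.ReflTransGen.head_induction_on with
  | refl => exact .refl _
  | head hs _ ih => exact .silent hs ih

theorem trans_reflTransGen (h : HasTrace step s t m)
    (hm : Relation.ReflTransGen (fun a b => step a none b) m s') : HasTrace step s t s' := by
  simpa using h.append (of_reflTransGen hm)

end HasTrace

section

variable {State : Type u} {Label : Type v} {step : State → Option Label → State → Prop}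
  {s s' : State} {l : Label} {t t₁ t₂ : List Label}

theorem hasTrace_nil_iff :
    HasTrace step s [] s' ↔ Relation.ReflTransGen (fun a b => step a none b) s s' := by
  refine ⟨fun h => ?_, HasTrace.of_reflTransGen⟩
  generalize hnil : ([] : List Label) = t at h
  induction h with
  | refl => exact .refl
  | silent hs _ ih => exact .head hs (ih hnil)
  | event => cases hnil

theorem hasTrace_cons_iff :
    HasTrace step s (l :: t) s' ↔ ∃ m₁ m₂, Relation.ReflTransGen (fun a b => step a none b) s m₁ ∧
      step m₁ (some l) m₂ ∧ HasTrace step m₂ t s' := by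
  constructor
  · intro h
    generalize hcons : l :: t = t' at h
    induction h with
    | refl => cases hcons
    | silent hs _ ih =>
      obtain ⟨m₁, m₂, hsilent, hevent, hrest⟩ := ih hcons
      exact ⟨m₁, m₂, .head hs hsilent, hevent, hrest⟩
    | event hs hrest =>
      cases hcons
      exact ⟨_, _, .refl, hs, hrest⟩
  · rintro ⟨m₁, m₂, hsilent, hevent, hrest⟩
    exact (HasTrace.of_reflTransGen hsilent).append (.event hevent hrest)

theorem hasTrace_append_iff :
    HasTrace step s (t₁ ++ t₂) s' ↔ ∃ m, HasTrace step s t₁ m ∧ HasTrace step m t₂ s' := by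
  refine ⟨fun h => ?_, fun ⟨_, h₁, h₂⟩ => h₁.append h₂⟩
  induction t₁ generalizing s with
  | nil => exact ⟨s, .refl s, h⟩
  | cons a t₁ ih =>
    obtain ⟨m₁, m₂, hsilent, hevent, hrest⟩ := hasTrace_cons_iff.mp h
    obtain ⟨m, h₁, h₂⟩ := ih hrest
    exact ⟨m, hasTrace_cons_iff.mpr ⟨m₁, m₂, hsilent, hevent, h₁⟩, h₂⟩

theorem hasTrace_singleton_iff :
    HasTrace step s [l] s' ↔ ∃ m₁ m₂, Relation.ReflTransGen (fun a b => step a none b) s m₁ ∧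
      step m₁ (some l) m₂ ∧ Relation.ReflTransGen (fun a b => step a none b) m₂ s' := by
  simp only [hasTrace_cons_iff, hasTrace_nil_iff]

end

section

variable {State : Type u} {Label : Type v} (step : State → Option Label → State → Prop)
  (s0 : State)

theorem endpoints_nil : Endpoints step s0 [] = silentClosure step {s0} := by
  ext s'
  simp [Endpoints, silentClosure, hasTrace_nil_iff]

theorem endpoints_append_singleton (t : List Label) (l : Label) :
    Endpoints step s0 (t ++ [l]) =
      silentClosure step (eventImage step l (Endpoints step s0 t)) := by
  ext s'
  simp only [Endpoints, silentClosure, eventImage, Set.mem_ofPred_eq, hasTrace_append_iff,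
    hasTrace_singleton_iff]
  constructor
  · rintro ⟨m, hpath, m₁, m₂, hsilent, hevent, hsilent'⟩
    exact ⟨m₂, ⟨m₁, hpath.trans_reflTransGen hsilent, hevent⟩, hsilent'⟩
  · rintro ⟨m₂, ⟨m₁, hpath, hevent⟩, hsilent'⟩
    exact ⟨m₁, hpath, m₁, m₂, .refl, hevent, hsilent'⟩

theorem track_nil : Track step s0 [] = silentClosure step {s0} := by
  simp [Track, TrackRev]

theorem track_append_singleton (t : List Label) (l : Label) :
    Track step s0 (t ++ [l]) = silentClosure step (eventImage step l (Track step s0 t)) := by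
  simp [Track, TrackRev]

end

/-- Full tracker correctness (main lemma):
`Track t = Endpoints t` for every finite trace `t`. -/
theorem track_eq_endpoints {State : Type u} {Label : Type v}
    (step : State → Option Label → State → Prop) (s0 : State) :
    ∀ t : List Label, Track step s0 t = Endpoints step s0 t := by
  intro t
  induction t using List.reverseRecOn with
  | nil => rw [track_nil, endpoints_nil]
  | append_singleton t l ih => rw [track_append_singleton, endpoints_append_singleton, ih]
end

section
/- Partial tracker soundness (Theorem 'partial-tracker', abstract form): let P : List Label → Set State be any partial tracker, i.e. P [] ⊆ silentClosure {s0} and P (t ++ [l]) ⊆ silentClosure (eventImage l (P t)) for all t and l. If T is a set of finite traces with P t ≠ ∅ for every t ∈ T, then every t ∈ T is exhibited by some atomic path: ∀ t ∈ T, ∃ s', HasTrace s0 t s'. -/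
/-! By induction along `t ++ [l]`, every state of `P t` is the endpoint of an atomic path from
`s0` exhibiting `t`: the endpoints for `t` are closed under silent steps, and the event `l`
carries them into the endpoints for `t ++ [l]`. -/

universe u v

namespace HasTrace

variable {State : Type u} {Label : Type v} {step : State → Option Label → State → Prop}
  {s s₁ s' : State} {t : List Label}

theorem snoc_silent (h : HasTrace step s t s₁) (hs : step s₁ none s') :
    HasTrace step s t s' := by
  induction h with
  | refl => exact silent hs (refl _)
  | silent h₁ _ ih => exact silent h₁ (ih hs)
  | event h₁ _ ih => exact event h₁ (ih hs)

theorem snoc_silents (h : HasTrace step s t s₁)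
    (hs : Relation.ReflTransGen (fun a b => step a none b) s₁ s') : HasTrace step s t s' := by
  induction hs with
  | refl => exact h
  | tail _ h₂ ih => exact ih.snoc_silent h₂

theorem snoc_event {l : Label} (h : HasTrace step s t s₁) (hs : step s₁ (some l) s') :
    HasTrace step s (t ++ [l]) s' := by
  induction h with
  | refl => exact event hs (refl _)
  | silent h₁ _ ih => exact silent h₁ (ih hs)
  | event h₁ _ ih => exact event h₁ (ih hs)

end HasTrace

section Endpoints

variable {State : Type u} {Label : Type v} (step : State → Option Label → State → Prop)
  (s0 : State)

theorem silentClosure_mono {M N : Set State} (h : M ⊆ N) :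
    silentClosure step M ⊆ silentClosure step N := fun _ ⟨s, hs, hrt⟩ => ⟨s, h hs, hrt⟩

theorem eventImage_mono (l : Label) {M N : Set State} (h : M ⊆ N) :
    eventImage step l M ⊆ eventImage step l N := fun _ ⟨s, hs, hstep⟩ => ⟨s, h hs, hstep⟩

theorem silentClosure_endpoints_subset (t : List Label) :
    silentClosure step (Endpoints step s0 t) ⊆ Endpoints step s0 t :=
  fun _ ⟨_, hs, hrt⟩ => HasTrace.snoc_silents hs hrt

theorem eventImage_endpoints_subset (t : List Label) (l : Label) :
    eventImage step l (Endpoints step s0 t) ⊆ Endpoints step s0 (t ++ [l]) :=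
  fun _ ⟨_, hs, hstep⟩ => HasTrace.snoc_event hs hstep

theorem silentClosure_singleton_subset_endpoints_nil :
    silentClosure step {s0} ⊆ Endpoints step s0 [] := by
  rintro _ ⟨_, rfl, hrt⟩
  exact (HasTrace.refl _).snoc_silents hrt

end Endpoints

def IsPartialTracker {State : Type u} {Label : Type v}
    (step : State → Option Label → State → Prop) (s0 : State) (P : List Label → Set State) :
    Prop :=
  P [] ⊆ silentClosure step {s0} ∧
    ∀ (t : List Label) (l : Label), P (t ++ [l]) ⊆ silentClosure step (eventImage step l (P t))

theorem IsPartialTracker.subset_endpoints {State : Type u} {Label : Type v}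
    {step : State → Option Label → State → Prop} {s0 : State} {P : List Label → Set State}
    (hP : IsPartialTracker step s0 P) (t : List Label) : P t ⊆ Endpoints step s0 t := by
  induction t using List.reverseRecOn with
  | nil => exact hP.1.trans (silentClosure_singleton_subset_endpoints_nil step s0)
  | append_singleton t l ih =>
    calc P (t ++ [l]) ⊆ silentClosure step (eventImage step l (P t)) := hP.2 t l
      _ ⊆ silentClosure step (Endpoints step s0 (t ++ [l])) :=
        silentClosure_mono step <|
          (eventImage_mono step l ih).trans (eventImage_endpoints_subset step s0 t l)
      _ ⊆ Endpoints step s0 (t ++ [l]) := silentClosure_endpoints_subset step s0 _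

/-- Partial tracker soundness. -/
theorem partial_tracker_sound {State : Type u} {Label : Type v}
    (step : State → Option Label → State → Prop) (s0 : State)
    (P : List Label → Set State)
    (hP0 : P [] ⊆ silentClosure step {s0})
    (hPstep : ∀ (t : List Label) (l : Label),
      P (t ++ [l]) ⊆ silentClosure step (eventImage step l (P t)))
    (T : Set (List Label))
    (hT : ∀ t ∈ T, P t ≠ ∅) :
    ∀ t ∈ T, ∃ s', HasTrace step s0 t s' := by
  intro t ht
  exact (Set.nonempty_iff_ne_empty.2 (hT t ht)).mono
    ((show IsPartialTracker step s0 P from ⟨hP0, hPstep⟩).subset_endpoints t)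
end
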